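/- For all real parameters a > 0, b > 1, T > 0, one has limsup_{χ→+∞} (1/χ)·∫_0^χ N_{a,b,T}(τ) dτ ≥ 2a(b − 1)/(π(b + 1)) > 0 and liminf_{χ→+∞} (1/χ)·∫_0^χ N_{a,b,T}(τ) dτ ≤ −2a(b − 1)/(π(b + 1)) < 0; in particular the limsup of the averaged integral is strictly positive and its liminf strictly negative. -/

import Mathlib

open Real Filter Set

/-- Breakpoints `s_n(b,T) = T·π·(b^n − 1)/(b − 1)`. -/
noncomputable def brk (b T : ℝ) (n : ℕ) : ℝ := T * Real.pi * (b ^ n - 1) / (b - 1)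

/-- Index of the segment containing `x ≥ 0`: the unique `m` with `s_m ≤ x < s_{m+1}`
(for `b > 1`, `T > 0`). -/
noncomputable def seg (b T x : ℝ) : ℕ := sInf {n : ℕ | x < brk b T (n + 1)}

/-- The saturated Nussbaum function `N_{a,b,T}`: on `[s_{n−1}, s_n)` (with `m = n − 1`)
it equals `(−1)^m·a·cos((χ − s_m)/(b^m·T))`, extended evenly to `χ < 0`. -/
noncomputable def satN (a b T : ℝ) (χ : ℝ) : ℝ :=
  (-1 : ℝ) ^ (seg b T |χ|) * a *
    Real.cos ((|χ| - brk b T (seg b T |χ|)) / (b ^ (seg b T |χ|) * T))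

/-- The integrated function `G_{a,b,T}(χ) = ∫_0^χ N_{a,b,T}(τ) dτ`. -/
noncomputable def satG (a b T : ℝ) (χ : ℝ) : ℝ := ∫ τ in (0:ℝ)..χ, satN a b T τ

/-!
On the `m`-th segment `[s_m, s_{m+1}]`, of length `π b^m T`, the function `N` is a half period of
`(-1)^m a cos`, so `G` vanishes at every breakpoint and reaches `(-1)^m a b^m T` at the midpoint
`x_m = s_m + (π/2) b^m T`. Since `x_m ≤ π b^m T (b + 1) / (2 (b - 1))`, the average `G(x_m)/x_m`
is at least `2a(b-1)/(π(b+1))` for even `m` and at most its negative for odd `m`, while `x_m → ∞`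
and the averages stay bounded by `a`.
-/

section Breakpoints

variable {b T : ℝ}

lemma brk_succ (hb : b ≠ 1) (n : ℕ) : brk b T (n + 1) = brk b T n + π * (b ^ n * T) := by
  have hb1 : b - 1 ≠ 0 := sub_ne_zero.mpr hb
  unfold brk
  field_simp
  ring

lemma brk_succ_sub_div (hb : 1 < b) (hT : 0 < T) (n : ℕ) :
    (brk b T (n + 1) - brk b T n) / (b ^ n * T) = π := by
  have : b ^ n * T ≠ 0 := by positivity
  rw [brk_succ hb.ne', add_sub_cancel_left, mul_div_cancel_right₀ _ this]

lemma brk_strictMono (hb : 1 < b) (hT : 0 < T) : StrictMono (brk b T) :=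
  strictMono_nat_of_lt_succ fun n => by
    rw [brk_succ hb.ne']
    have : 0 < π * (b ^ n * T) := by positivity
    linarith

lemma brk_nonneg (hb : 1 < b) (hT : 0 < T) (n : ℕ) : 0 ≤ brk b T n := by
  simpa [brk] using (brk_strictMono hb hT).monotone (Nat.zero_le n)

lemma seg_eq_of_mem_Ico (hb : 1 < b) (hT : 0 < T) {m : ℕ} {x : ℝ}
    (hx : x ∈ Ico (brk b T m) (brk b T (m + 1))) : seg b T x = m := by
  refine le_antisymm (Nat.sInf_le hx.2) (le_csInf ⟨m, hx.2⟩ fun k hk => ?_)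
  by_contra! hkm
  have : brk b T (k + 1) ≤ brk b T m := (brk_strictMono hb hT).monotone hkm
  exact (lt_of_lt_of_le (lt_of_le_of_lt hx.1 hk) this).false

end Breakpoints

section SegmentIntegrals

variable {a b T : ℝ}

lemma abs_satN_le (x : ℝ) : |satN a b T x| ≤ |a| := by
  rw [satN, abs_mul, abs_mul, abs_pow, abs_neg, abs_one, one_pow, one_mul]
  exact mul_le_of_le_one_right (abs_nonneg a) (abs_cos_le_one _)

lemma abs_one_div_mul_satG_le (χ : ℝ) : |1 / χ * satG a b T χ| ≤ |a| := by
  have hG : |satG a b T χ| ≤ |a| * |χ| := by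
    simpa [satG] using intervalIntegral.norm_integral_le_of_norm_le_const (a := 0) (b := χ)
      (f := satN a b T) fun x _ => by simpa only [Real.norm_eq_abs] using abs_satN_le x
  rcases eq_or_ne χ 0 with rfl | hχ
  · simp
  rw [abs_mul, abs_div, abs_one, div_mul_eq_mul_div, one_mul, div_le_iff₀ (abs_pos.mpr hχ)]
  exact hG

lemma satN_eq_of_mem_Icc (hb : 1 < b) (hT : 0 < T) {m : ℕ} {x : ℝ}
    (hx : x ∈ Icc (brk b T m) (brk b T (m + 1))) :
    satN a b T x = (-1) ^ m * a * cos ((x - brk b T m) / (b ^ m * T)) := by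
  rw [satN, abs_of_nonneg ((brk_nonneg hb hT m).trans hx.1)]
  rcases hx.2.lt_or_eq with hlt | rfl
  · rw [seg_eq_of_mem_Ico hb hT ⟨hx.1, hlt⟩]
  -- At the right endpoint `seg` points to the next segment; both formulas give `(-1)^(m+1) a`.
  · have hnext : brk b T (m + 1) ∈ Ico (brk b T (m + 1)) (brk b T (m + 1 + 1)) :=
      ⟨le_rfl, brk_strictMono hb hT (Nat.lt_succ_self _)⟩
    rw [seg_eq_of_mem_Ico hb hT hnext, brk_succ_sub_div hb hT, sub_self, zero_div, cos_zero,
      cos_pi, pow_succ]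
    ring

lemma intervalIntegrable_satN_of_mem_Icc (hb : 1 < b) (hT : 0 < T) {m : ℕ} {x : ℝ}
    (hx : x ∈ Icc (brk b T m) (brk b T (m + 1))) :
    IntervalIntegrable (satN a b T) MeasureTheory.volume (brk b T m) x := by
  have hc : Continuous fun τ => (-1 : ℝ) ^ m * a * cos ((τ - brk b T m) / (b ^ m * T)) := by
    fun_prop
  refine (hc.intervalIntegrable _ _).congr fun τ hτ => ?_
  rw [uIoc_of_le hx.1] at hτ
  exact (satN_eq_of_mem_Icc hb hT ⟨hτ.1.le, hτ.2.trans hx.2⟩).symm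

lemma integral_satN_of_mem_Icc (hb : 1 < b) (hT : 0 < T) {m : ℕ} {x : ℝ}
    (hx : x ∈ Icc (brk b T m) (brk b T (m + 1))) :
    ∫ τ in brk b T m..x, satN a b T τ =
      (-1) ^ m * a * (b ^ m * T) * sin ((x - brk b T m) / (b ^ m * T)) := by
  have hbT : b ^ m * T ≠ 0 := by positivity
  have hcongr : EqOn (satN a b T) (fun τ => (-1) ^ m * a * cos ((τ - brk b T m) / (b ^ m * T)))
      (uIcc (brk b T m) x) := fun τ hτ => by
    rw [uIcc_of_le hx.1] at hτ
    exact satN_eq_of_mem_Icc hb hT ⟨hτ.1, hτ.2.trans hx.2⟩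
  rw [intervalIntegral.integral_congr hcongr, intervalIntegral.integral_const_mul,
    intervalIntegral.integral_comp_sub_right (fun y => cos (y / (b ^ m * T))),
    intervalIntegral.integral_comp_div cos hbT, integral_cos, sub_self, zero_div, sin_zero,
    sub_zero, smul_eq_mul]
  ring

lemma brk_succ_mem_Icc (hb : 1 < b) (hT : 0 < T) (k : ℕ) :
    brk b T (k + 1) ∈ Icc (brk b T k) (brk b T (k + 1)) :=
  ⟨(brk_strictMono hb hT (Nat.lt_succ_self k)).le, le_rfl⟩

lemma intervalIntegrable_satN_zero_brk (hb : 1 < b) (hT : 0 < T) (n : ℕ) :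
    IntervalIntegrable (satN a b T) MeasureTheory.volume 0 (brk b T n) := by
  simpa [brk] using IntervalIntegrable.trans_iterate fun k _ =>
    intervalIntegrable_satN_of_mem_Icc (a := a) hb hT (brk_succ_mem_Icc hb hT k)

lemma satG_brk (hb : 1 < b) (hT : 0 < T) (n : ℕ) : satG a b T (brk b T n) = 0 := by
  have hsum := intervalIntegral.sum_integral_adjacent_intervals (n := n) fun k _ =>
    intervalIntegrable_satN_of_mem_Icc (a := a) hb hT (brk_succ_mem_Icc hb hT k)
  rw [show brk b T 0 = 0 by simp [brk]] at hsum
  rw [satG, ← hsum]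
  refine Finset.sum_eq_zero fun k _ => ?_
  rw [integral_satN_of_mem_Icc hb hT (brk_succ_mem_Icc hb hT k), brk_succ_sub_div hb hT, sin_pi,
    mul_zero]

end SegmentIntegrals

section Midpoints

noncomputable def brkMid (b T : ℝ) (m : ℕ) : ℝ := brk b T m + π / 2 * (b ^ m * T)

variable {a b T : ℝ}

lemma brkMid_mem_Icc (hb : 1 < b) (hT : 0 < T) (m : ℕ) :
    brkMid b T m ∈ Icc (brk b T m) (brk b T (m + 1)) := by
  have : 0 < π * (b ^ m * T) := by positivity
  constructor <;> (rw [brkMid]; try rw [brk_succ hb.ne']) <;> linarith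

lemma brkMid_pos (hb : 1 < b) (hT : 0 < T) (m : ℕ) : 0 < brkMid b T m := by
  have := brk_nonneg hb hT m
  rw [brkMid]
  positivity

lemma satG_brkMid (hb : 1 < b) (hT : 0 < T) (m : ℕ) :
    satG a b T (brkMid b T m) = (-1) ^ m * a * (b ^ m * T) := by
  have hbT : b ^ m * T ≠ 0 := by positivity
  have hmid := brkMid_mem_Icc hb hT m
  rw [satG, ← intervalIntegral.integral_add_adjacent_intervals
      (intervalIntegrable_satN_zero_brk hb hT m) (intervalIntegrable_satN_of_mem_Icc hb hT hmid)]
  rw [← satG, satG_brk hb hT, integral_satN_of_mem_Icc hb hT hmid, brkMid, add_sub_cancel_left,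
    mul_div_cancel_right₀ _ hbT, sin_pi_div_two]
  ring

lemma tendsto_brkMid_atTop (hb : 1 < b) (hT : 0 < T) : Tendsto (brkMid b T) atTop atTop := by
  have hpow : Tendsto (fun m : ℕ => π / 2 * (b ^ m * T)) atTop atTop :=
    ((tendsto_pow_atTop_atTop_of_one_lt hb).atTop_mul_const hT).const_mul_atTop (by positivity)
  exact tendsto_atTop_mono (fun m => le_add_of_nonneg_left (brk_nonneg hb hT m)) hpow

lemma div_le_div_brkMid (ha : 0 ≤ a) (hb : 1 < b) (hT : 0 < T) (m : ℕ) :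
    2 * a * (b - 1) / (π * (b + 1)) ≤ a * (b ^ m * T) / brkMid b T m := by
  have hb1 : 0 < b - 1 := by linarith
  have hbrk : brkMid b T m * (b - 1) = π * (b ^ m * T) * (b + 1) / 2 - π * T := by
    rw [brkMid, brk]
    field_simp
    ring
  rw [div_le_div_iff₀ (by positivity) (brkMid_pos hb hT m)]
  nlinarith [mul_nonneg (mul_nonneg ha hT.le) pi_pos.le]

end Midpoints

/-- quantitative Nussbaum property of the averaged integral. -/
theorem satN_averaged_property (a b T : ℝ) (ha : 0 < a) (hb : 1 < b) (hT : 0 < T) :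
    2 * a * (b - 1) / (Real.pi * (b + 1)) ≤
      Filter.limsup (fun χ : ℝ => (1 / χ) * ∫ τ in (0:ℝ)..χ, satN a b T τ) Filter.atTop ∧
    0 < 2 * a * (b - 1) / (Real.pi * (b + 1)) ∧
    Filter.liminf (fun χ : ℝ => (1 / χ) * ∫ τ in (0:ℝ)..χ, satN a b T τ) Filter.atTop ≤
      -(2 * a * (b - 1) / (Real.pi * (b + 1))) ∧
    -(2 * a * (b - 1) / (Real.pi * (b + 1))) < 0 := by
  set C := 2 * a * (b - 1) / (π * (b + 1))
  change C ≤ limsup (fun χ => 1 / χ * satG a b T χ) atTop ∧ 0 < C ∧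
    liminf (fun χ => 1 / χ * satG a b T χ) atTop ≤ -C ∧ -C < 0
  have hC : 0 < C := div_pos (by nlinarith) (by nlinarith [pi_pos])
  have hbound (χ : ℝ) : |1 / χ * satG a b T χ| ≤ a :=
    (abs_one_div_mul_satG_le χ).trans_eq (abs_of_pos ha)
  have hmid (m : ℕ) : 1 / brkMid b T m * satG a b T (brkMid b T m) =
      (-1) ^ m * (a * (b ^ m * T) / brkMid b T m) := by
    rw [satG_brkMid hb hT]
    ring
  have hkey := div_le_div_brkMid ha.le hb hT
  have hsub (k : ℕ) : Tendsto (fun m => brkMid b T (2 * m + k)) atTop atTop :=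
    (tendsto_brkMid_atTop hb hT).comp (StrictMono.tendsto_atTop fun m n h => by omega)
  have hbddAbove : IsBoundedUnder (· ≤ ·) atTop fun χ => 1 / χ * satG a b T χ :=
    isBoundedUnder_of ⟨a, fun χ => le_of_abs_le (hbound χ)⟩
  have hbddBelow : IsBoundedUnder (· ≥ ·) atTop fun χ => 1 / χ * satG a b T χ :=
    isBoundedUnder_of ⟨-a, fun χ => neg_le_of_abs_le (hbound χ)⟩
  refine ⟨le_limsup_of_frequently_le ?_ hbddAbove, hC, liminf_le_of_frequently_le ?_ hbddBelow,
    neg_lt_zero.mpr hC⟩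
  · refine (hsub 0).frequently (Frequently.of_forall fun m => ?_)
    rw [add_zero, hmid, pow_mul, neg_one_sq, one_pow, one_mul]
    exact hkey (2 * m)
  · refine (hsub 1).frequently (Frequently.of_forall fun m => ?_)
    rw [hmid, pow_succ, pow_mul, neg_one_sq, one_pow, one_mul, neg_one_mul]
    exact neg_le_neg (hkey _)
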